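/- There exists a size-preserving bijection between plane binary trees with n internal nodes and λυ-terms of size n, for every n ≥ 1. -/
import Mathlib


open Finset Filter

mutual
inductive Tm : Type
  | idx : Nat → Tm
  | lam : Tm → Tm
  | app : Tm → Tm → Tm
  | clos : Tm → Subst → Tm
inductive Subst : Type
  | slash : Tm → Subst
  | lift : Subst → Subst
  | shift : Subst
end

mutual
/-- Natural size of a λυ-term: every constructor weighs 1; index n has size n+1. -/
def Tm.size : Tm → Nat
  | .idx n => n + 1
  | .lam a => Tm.size a + 1
  | .app a b => Tm.size a + Tm.size b + 1
  | .clos a s => Tm.size a + Subst.size s + 1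
/-- Natural size of an explicit substitution. -/
def Subst.size : Subst → Nat
  | .slash a => Tm.size a + 1
  | .lift s => Subst.size s + 1
  | .shift => 1
end

/-- Number of λυ-terms of size `n`. -/
noncomputable def tcount (n : ℕ) : ℕ := Nat.card {a : Tm // Tm.size a = n}

/-- Number of explicit substitutions of size `n`. -/
noncomputable def scount (n : ℕ) : ℕ := Nat.card {s : Subst // Subst.size s = n}

/-- Plane binary trees. -/
inductive Btree : Type
  | leaf : Btree
  | node : Btree → Btree → Btree

/-- Number of internal nodes of a plane binary tree. -/
def Btree.nodes : Btree → ℕ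
  | .leaf => 0
  | .node l r => Btree.nodes l + Btree.nodes r + 1

/-- Size-incrementing map whose image is indices ≥ 1 together with closures. -/
def psi : Tm → Tm
  | .idx n => .idx (n+1)
  | .lam a => .clos a .shift
  | .app a b => .clos a (.slash b)
  | .clos a s => .clos a (.lift s)

def Phi : Option Tm → Option Tm → Tm
  | none, none => .idx 0
  | none, some b => .lam b
  | some a, some b => .app a b
  | some a, none => psi a

def fwd : Btree → Option Tm
  | .leaf => none
  | .node l r => some (Phi (fwd l) (fwd r))

def invh : Tm → Btree
  | .idx 0 => .node .leaf .leaf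
  | .idx (n+1) => .node (invh (.idx n)) .leaf
  | .lam b => .node .leaf (invh b)
  | .app a b => .node (invh a) (invh b)
  | .clos a .shift => .node (invh (.lam a)) .leaf
  | .clos a (.slash b) => .node (invh (.app a b)) .leaf
  | .clos a (.lift s) => .node (invh (.clos a s)) .leaf
termination_by t => Tm.size t
decreasing_by all_goals simp [Tm.size, Subst.size] <;> omega

def osize : Option Tm → ℕ
  | none => 0
  | some t => Tm.size t

@[simp] lemma osize_none : osize none = 0 := rfl
@[simp] lemma osize_some (t : Tm) : osize (some t) = Tm.size t := rfl

lemma psi_size (a : Tm) : Tm.size (psi a) = Tm.size a + 1 := by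
  cases a <;> simp [psi, Tm.size, Subst.size] <;> omega

lemma Phi_size (x y : Option Tm) : Tm.size (Phi x y) = osize x + osize y + 1 := by
  cases x <;> cases y <;> simp [Phi, osize, Tm.size, psi_size]

lemma fwd_size (b : Btree) : osize (fwd b) = Btree.nodes b := by
  induction b with
  | leaf => simp [fwd, Btree.nodes]
  | node l r hl hr => simp [fwd, Btree.nodes, Phi_size, hl, hr]

lemma invh_psi (a : Tm) : invh (psi a) = .node (invh a) .leaf := by
  cases a <;> simp [psi, invh]

def oinvh : Option Tm → Btree
  | none => .leaf
  | some t => invh t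

@[simp] lemma oinvh_none : oinvh none = .leaf := rfl
@[simp] lemma oinvh_some (t : Tm) : oinvh (some t) = invh t := rfl

lemma invh_Phi (x y : Option Tm) : invh (Phi x y) = .node (oinvh x) (oinvh y) := by
  cases x <;> cases y <;> simp [Phi, invh, oinvh, invh_psi]

lemma left_inv (b : Btree) : oinvh (fwd b) = b := by
  induction b with
  | leaf => simp [fwd]
  | node l r hl hr => simp [fwd, invh_Phi, hl, hr]

lemma right_inv (t : Tm) : fwd (invh t) = some t := by
  induction t using invh.induct with
  | case1 => rw [invh.eq_1]; simp [fwd, Phi]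
  | case2 n ih => rw [invh.eq_2]; simp [fwd, ih, Phi, psi]
  | case3 b ih => rw [invh.eq_3]; simp [fwd, ih, Phi]
  | case4 a b iha ihb => rw [invh.eq_4]; simp [fwd, iha, ihb, Phi]
  | case5 a ih => rw [invh.eq_5]; simp [fwd, ih, Phi, psi]
  | case6 a b ih => rw [invh.eq_6]; simp [fwd, ih, Phi, psi]
  | case7 a s ih => rw [invh.eq_7]; simp [fwd, ih, Phi, psi]

lemma invh_nodes (t : Tm) : Btree.nodes (invh t) = Tm.size t := by
  have := fwd_size (invh t)
  rw [right_inv, osize_some] at this; exact this.symm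

/-- for every n ≥ 1 there is a bijection between plane binary trees with n
internal nodes and λυ-terms of size n (such a bijection is size-preserving by construction). -/
theorem stmt3 :
    ∀ n : ℕ, 1 ≤ n →
      Nonempty ({b : Btree // Btree.nodes b = n} ≃ {a : Tm // Tm.size a = n}) := by
  intro n hn
  refine ⟨{
    toFun := fun b => ⟨(fwd b.1).getD (.idx 0), ?_⟩
    invFun := fun t => ⟨invh t.1, by rw [invh_nodes, t.2]⟩
    left_inv := ?_
    right_inv := ?_ }⟩
  · obtain ⟨b, hb⟩ := b
    cases b with
    | leaf => simp [Btree.nodes] at hb; omega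
    | node l r =>
        have := fwd_size (.node l r)
        simp only [fwd, osize] at this ⊢
        rw [Option.getD_some, this, hb]
  · rintro ⟨b, hb⟩
    cases b with
    | leaf => simp [Btree.nodes] at hb; omega
    | node l r =>
        have h1 := left_inv (Btree.node l r)
        simp only [fwd, oinvh] at h1
        simp [fwd, h1]
  · rintro ⟨t, ht⟩
    simp [right_inv]
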